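/- arXiv:1805.03275 — 2 statements merged into one kernel-verified Lean document; each statement's English description precedes it below -/
import Mathlib

section
/- Suppose additionally g has the partly linear form g(X) = γ₁'X₁ + g₂(X₂). Then with V₂ the population residual of X₂ on X₁, the subvector β₂ of the best linear approximation coefficient satisfies β₂ = E[V₂V₂']^{-1}E[V₂ g₂(X₂)] = argmin over b₂ of E[(g₂(X₂) - b₂'V₂)²]. -/
/-!
Write `M = E[XX']` in blocks and `A = [-M₂₁M₁₁⁻¹ | I]`, so that `V₂ = AX`. Then
`AM = [0 | S]` with `S` the Schur complement of `M₁₁`: this is `E[V₂X₁'] = 0`, and it says that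
`AMv` only depends on the second block `v₂`. Hence `E[V₂V₂']β₂ = AM(A'β₂) = AMβ = A E[Xg]`,
and, since `g = γ'X + g₂` with `γ₂ = 0`, also `E[V₂g₂] = A E[Xg] - AMγ = A E[Xg]`. So `β₂`
solves the normal equations of the regression of `g₂(X₂)` on `V₂`; the Gram matrix
`E[V₂V₂'] = AMA'` is positive definite because `A'` is injective, and solutions of the normal
equations minimize the mean squared error by Pythagoras.
-/

open MeasureTheory Matrix

noncomputable section Moments

variable {Ω : Type*} [MeasurableSpace Ω] {μ : Measure Ω} {k l m n : Type*}
  {X : Ω → m → ℝ} {Y : Ω → n → ℝ} {F G : Ω → ℝ}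

def momentVec (μ : Measure Ω) (X : Ω → m → ℝ) (G : Ω → ℝ) : m → ℝ :=
  fun i => ∫ ω, X ω i * G ω ∂μ

def crossMoment (μ : Measure Ω) (X : Ω → m → ℝ) (Y : Ω → n → ℝ) : Matrix m n ℝ :=
  of fun i j => ∫ ω, X ω i * Y ω j ∂μ

lemma memLp_dotProduct [Fintype m] (c : m → ℝ) (hX : ∀ i, MemLp (X · i) 2 μ) :
    MemLp (fun ω => c ⬝ᵥ X ω) 2 μ := by
  simpa only [dotProduct] using memLp_finsetSum _ fun i _ => (hX i).const_mul (c i)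

lemma integral_dotProduct_mul [Fintype m] (c : m → ℝ) (hX : ∀ i, MemLp (X · i) 2 μ)
    (hG : MemLp G 2 μ) :
    ∫ ω, (c ⬝ᵥ X ω) * G ω ∂μ = c ⬝ᵥ momentVec μ X G := by
  simp_rw [dotProduct, Finset.sum_mul, mul_assoc]
  have hint : ∀ i, Integrable (fun ω => c i * (X ω i * G ω)) μ := fun i =>
    ((hX i).integrable_mul hG).const_mul (c i)
  rw [integral_finsetSum _ fun i _ => hint i]
  simp_rw [integral_const_mul, momentVec]

lemma momentVec_mulVec [Fintype m] (A : Matrix k m ℝ) (hX : ∀ i, MemLp (X · i) 2 μ)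
    (hG : MemLp G 2 μ) :
    momentVec μ (fun ω => A *ᵥ X ω) G = A *ᵥ momentVec μ X G :=
  funext fun _ => integral_dotProduct_mul _ hX hG

lemma momentVec_dotProduct [Fintype n] (c : n → ℝ) (hX : ∀ i, MemLp (X · i) 2 μ)
    (hY : ∀ j, MemLp (Y · j) 2 μ) :
    momentVec μ X (fun ω => c ⬝ᵥ Y ω) = crossMoment μ X Y *ᵥ c := by
  ext i
  simp_rw [momentVec, mul_comm (X _ i), integral_dotProduct_mul c hY (hX i), dotProduct_comm c]
  simp only [mulVec, dotProduct, crossMoment, momentVec, of_apply, mul_comm (Y _ _)]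

lemma momentVec_sub (hX : ∀ i, MemLp (X · i) 2 μ) (hF : MemLp F 2 μ) (hG : MemLp G 2 μ) :
    momentVec μ X (fun ω => F ω - G ω) = momentVec μ X F - momentVec μ X G := by
  ext i
  simp_rw [momentVec, mul_sub]
  exact integral_sub ((hX i).integrable_mul hF) ((hX i).integrable_mul hG)

lemma crossMoment_mulVec_left [Fintype m] (A : Matrix k m ℝ) (hX : ∀ i, MemLp (X · i) 2 μ)
    (hY : ∀ j, MemLp (Y · j) 2 μ) :
    crossMoment μ (fun ω => A *ᵥ X ω) Y = A * crossMoment μ X Y := by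
  ext a j
  exact congrFun (momentVec_mulVec (G := (Y · j)) A hX (hY j)) a

lemma crossMoment_transpose : (crossMoment μ X Y)ᵀ = crossMoment μ Y X := by
  ext j i
  simp only [crossMoment, transpose_apply, of_apply, mul_comm]

lemma crossMoment_mulVec_right [Fintype n] (B : Matrix k n ℝ) (hX : ∀ i, MemLp (X · i) 2 μ)
    (hY : ∀ j, MemLp (Y · j) 2 μ) :
    crossMoment μ X (fun ω => B *ᵥ Y ω) = crossMoment μ X Y * Bᵀ := by
  rw [← transpose_transpose (crossMoment μ X _), crossMoment_transpose,
    crossMoment_mulVec_left B hY hX, transpose_mul, crossMoment_transpose]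

lemma crossMoment_mulVec_mulVec [Fintype m] [Fintype n] (A : Matrix k m ℝ) (B : Matrix l n ℝ)
    (hX : ∀ i, MemLp (X · i) 2 μ) (hY : ∀ j, MemLp (Y · j) 2 μ) :
    crossMoment μ (fun ω => A *ᵥ X ω) (fun ω => B *ᵥ Y ω) = A * crossMoment μ X Y * Bᵀ := by
  rw [crossMoment_mulVec_left (Y := fun ω => B *ᵥ Y ω) A hX fun j => memLp_dotProduct (B j) hY,
    crossMoment_mulVec_right B hX hY, Matrix.mul_assoc]

lemma integral_sq_sub_dotProduct_le_of_normal_eq [Fintype m] {V : Ω → m → ℝ}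
    (hV : ∀ i, MemLp (V · i) 2 μ) (hG : MemLp G 2 μ) {b : m → ℝ}
    (hb : crossMoment μ V V *ᵥ b = momentVec μ V G) (c : m → ℝ) :
    ∫ ω, (G ω - b ⬝ᵥ V ω) ^ 2 ∂μ ≤ ∫ ω, (G ω - c ⬝ᵥ V ω) ^ 2 ∂μ := by
  set R := fun ω => G ω - b ⬝ᵥ V ω
  set D := fun ω => (b - c) ⬝ᵥ V ω
  have hR : MemLp R 2 μ := hG.sub (memLp_dotProduct b hV)
  have hD : MemLp D 2 μ := memLp_dotProduct (b - c) hV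
  have horth : momentVec μ V R = 0 := by
    rw [momentVec_sub hV hG (memLp_dotProduct b hV), momentVec_dotProduct b hV hV, hb, sub_self]
  have hcross : ∫ ω, D ω * R ω ∂μ = 0 := by
    rw [integral_dotProduct_mul _ hV hR, horth, dotProduct_zero]
  have hsplit : ∀ ω, (G ω - c ⬝ᵥ V ω) ^ 2 = R ω ^ 2 + (2 * (D ω * R ω) + D ω ^ 2) := by
    intro ω
    simp only [R, D, sub_dotProduct]
    ring
  have hDR : Integrable (fun ω => 2 * (D ω * R ω)) μ :=
    (hD.integrable_mul hR).const_mul 2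
  have hDR_D : Integrable (fun ω => 2 * (D ω * R ω) + D ω ^ 2) μ := hDR.add hD.integrable_sq
  change ∫ ω, R ω ^ 2 ∂μ ≤ _
  simp_rw [hsplit]
  rw [integral_add hR.integrable_sq hDR_D, integral_add hDR hD.integrable_sq, integral_const_mul,
    hcross, mul_zero, zero_add]
  exact le_add_of_nonneg_right (integral_nonneg fun ω => sq_nonneg _)

end Moments

section PartialOut

variable {m n : Type*} [Fintype m] [Fintype n] [DecidableEq m] [DecidableEq n]

-- `partialOut M *ᵥ X = X₂ - M₂₁ M₁₁⁻¹ X₁` is the residual of the population regression of the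
-- second block of `X` on the first when `M = E[XX']`.
noncomputable def partialOut (M : Matrix (m ⊕ n) (m ⊕ n) ℝ) : Matrix n (m ⊕ n) ℝ :=
  fromCols (-(M.toBlocks₂₁ * M.toBlocks₁₁⁻¹)) 1

lemma partialOut_mul (M : Matrix (m ⊕ n) (m ⊕ n) ℝ) (h : IsUnit M.toBlocks₁₁.det) :
    partialOut M * M =
      fromCols 0 (M.toBlocks₂₂ - M.toBlocks₂₁ * M.toBlocks₁₁⁻¹ * M.toBlocks₁₂) := by
  rw [partialOut]
  conv_lhs => arg 2; rw [← fromBlocks_toBlocks M]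
  rw [fromCols_mul_fromBlocks, Matrix.neg_mul, Matrix.mul_assoc,
    nonsing_inv_mul _ h, Matrix.mul_one, Matrix.one_mul, Matrix.one_mul, neg_add_cancel,
    Matrix.neg_mul, neg_add_eq_sub, Matrix.mul_assoc]

lemma partialOut_mul_mulVec (M : Matrix (m ⊕ n) (m ⊕ n) ℝ) (h : IsUnit M.toBlocks₁₁.det)
    (v : m ⊕ n → ℝ) :
    (partialOut M * M) *ᵥ v =
      (M.toBlocks₂₂ - M.toBlocks₂₁ * M.toBlocks₁₁⁻¹ * M.toBlocks₁₂) *ᵥ (v ∘ Sum.inr) := by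
  rw [partialOut_mul M h, fromCols_mulVec, zero_mulVec, zero_add]

lemma partialOut_transpose_mulVec_comp_inr (M : Matrix (m ⊕ n) (m ⊕ n) ℝ) (b : n → ℝ) :
    ((partialOut M)ᵀ *ᵥ b) ∘ Sum.inr = b := by
  rw [partialOut, transpose_fromCols, fromRows_mulVec, Sum.elim_comp_inr, transpose_one,
    one_mulVec]

lemma partialOut_vecMul_injective (M : Matrix (m ⊕ n) (m ⊕ n) ℝ) :
    Function.Injective (partialOut M).vecMul := fun b b' h => by
  simpa only [← mulVec_transpose, partialOut_transpose_mulVec_comp_inr] using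
    congrArg (· ∘ Sum.inr) h

end PartialOut

section FrischWaughLovell

variable {Ω : Type*} [MeasurableSpace Ω] {μ : Measure Ω} {m n : Type*} [Fintype m] [Fintype n]
  [DecidableEq m] [DecidableEq n]

theorem crossMoment_partialOut_mulVec_comp_inr {X : Ω → m ⊕ n → ℝ}
    (hX : ∀ i, MemLp (X · i) 2 μ) {M : Matrix (m ⊕ n) (m ⊕ n) ℝ} (hM : crossMoment μ X X = M)
    (hdet : IsUnit M.det) (hdet₁₁ : IsUnit M.toBlocks₁₁.det) {G G₂ : Ω → ℝ} (hG₂ : MemLp G₂ 2 μ)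
    {γ : m ⊕ n → ℝ} (hγ : γ ∘ Sum.inr = 0) (hG : ∀ ω, G ω = γ ⬝ᵥ X ω + G₂ ω) :
    crossMoment μ (fun ω => partialOut M *ᵥ X ω) (fun ω => partialOut M *ᵥ X ω) *ᵥ
        ((M⁻¹ *ᵥ momentVec μ X G) ∘ Sum.inr) =
      momentVec μ (fun ω => partialOut M *ᵥ X ω) G₂ := by
  set A := partialOut M
  set S := M.toBlocks₂₂ - M.toBlocks₂₁ * M.toBlocks₁₁⁻¹ * M.toBlocks₁₂
  have hAM : ∀ v, (A * M) *ᵥ v = S *ᵥ (v ∘ Sum.inr) := partialOut_mul_mulVec M hdet₁₁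
  have hGmem : MemLp G 2 μ := by
    rw [funext hG]
    exact (memLp_dotProduct γ hX).add hG₂
  have hG₂eq : G₂ = fun ω => G ω - γ ⬝ᵥ X ω := funext fun ω => by rw [hG]; ring
  calc _ = (A * M) *ᵥ (Aᵀ *ᵥ ((M⁻¹ *ᵥ momentVec μ X G) ∘ Sum.inr)) := by
        rw [crossMoment_mulVec_mulVec A A hX hX, hM, mulVec_mulVec]
    _ = (A * M) *ᵥ (M⁻¹ *ᵥ momentVec μ X G) := by
        rw [hAM, hAM, partialOut_transpose_mulVec_comp_inr]
    _ = A *ᵥ momentVec μ X G - (A * M) *ᵥ γ := by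
        rw [hAM γ, hγ, mulVec_zero, sub_zero, ← mulVec_mulVec, mulVec_mulVec _ M,
          mul_nonsing_inv _ hdet, one_mulVec]
    _ = momentVec μ (fun ω => A *ᵥ X ω) G₂ := by
        rw [momentVec_mulVec A hX hG₂, hG₂eq, momentVec_sub hX hGmem (memLp_dotProduct γ hX),
          momentVec_dotProduct γ hX hX, hM, mulVec_sub, mulVec_mulVec]

end FrischWaughLovell

theorem stmt16_general
    {Ω : Type*} [MeasurableSpace Ω] (μ : Measure Ω)
    {p₁ p₂ : ℕ}
    (X : Ω → (Fin p₁ ⊕ Fin p₂) → ℝ) (g : ((Fin p₁ ⊕ Fin p₂) → ℝ) → ℝ)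
    (γ₁ : Fin p₁ → ℝ) (g₂ : (Fin p₂ → ℝ) → ℝ)
    (hpl : ∀ v : (Fin p₁ ⊕ Fin p₂) → ℝ,
      g v = (∑ j, γ₁ j * v (Sum.inl j)) + g₂ (fun a => v (Sum.inr a)))
    (hXi : ∀ i, MemLp (fun ω => X ω i) 2 μ)
    (hg₂ : MemLp (fun ω => g₂ (fun a => X ω (Sum.inr a))) 2 μ)
    (M : Matrix (Fin p₁ ⊕ Fin p₂) (Fin p₁ ⊕ Fin p₂) ℝ)
    (hM : M = Matrix.of fun i j => ∫ ω, X ω i * X ω j ∂μ)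
    (hMpos : M.PosDef)
    (β : (Fin p₁ ⊕ Fin p₂) → ℝ)
    (hβ : β = M⁻¹.mulVec fun i => ∫ ω, X ω i * g (X ω) ∂μ)
    (M11 : Matrix (Fin p₁) (Fin p₁) ℝ)
    (hM11 : M11 = Matrix.of fun a b => ∫ ω, X ω (Sum.inl a) * X ω (Sum.inl b) ∂μ)
    (M21 : Matrix (Fin p₂) (Fin p₁) ℝ)
    (hM21 : M21 = Matrix.of fun a b => ∫ ω, X ω (Sum.inr a) * X ω (Sum.inl b) ∂μ)
    (V2 : Ω → Fin p₂ → ℝ)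
    (hV2 : ∀ ω a, V2 ω a =
      X ω (Sum.inr a) - ∑ b, (M21 * M11⁻¹) a b * X ω (Sum.inl b))
    (MV : Matrix (Fin p₂) (Fin p₂) ℝ)
    (hMV : MV = Matrix.of fun a b => ∫ ω, V2 ω a * V2 ω b ∂μ) :
    (fun a => β (Sum.inr a)) =
        MV⁻¹.mulVec (fun a => ∫ ω, V2 ω a * g₂ (fun b => X ω (Sum.inr b)) ∂μ) ∧
      ∀ b₂ : Fin p₂ → ℝ,
        (∫ ω, (g₂ (fun b => X ω (Sum.inr b)) - ∑ a, β (Sum.inr a) * V2 ω a) ^ 2 ∂μ) ≤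
          ∫ ω, (g₂ (fun b => X ω (Sum.inr b)) - ∑ a, b₂ a * V2 ω a) ^ 2 ∂μ := by
  have hMc : crossMoment μ X X = M := hM.symm
  have hMVc : crossMoment μ V2 V2 = MV := hMV.symm
  have hV : V2 = fun ω => partialOut M *ᵥ X ω := by
    have hM₁₁ : M11 = M.toBlocks₁₁ := by rw [hM11, hM]; rfl
    have hM₂₁ : M21 = M.toBlocks₂₁ := by rw [hM21, hM]; rfl
    ext ω a
    rw [hV2, partialOut, fromCols_mulVec, one_mulVec, ← hM₁₁, ← hM₂₁]
    simp [neg_mulVec, mulVec, dotProduct, sub_eq_neg_add]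
  have hVmem : ∀ a, MemLp (V2 · a) 2 μ := by
    rw [hV]
    exact fun a => memLp_dotProduct _ hXi
  have hMVpos : MV.PosDef := by
    rw [← hMVc, hV, crossMoment_mulVec_mulVec _ _ hXi hXi, hMc,
      ← conjTranspose_eq_transpose_of_trivial]
    exact hMpos.mul_mul_conjTranspose_same (partialOut_vecMul_injective M)
  have hnormal : crossMoment μ V2 V2 *ᵥ (β ∘ Sum.inr) =
      momentVec μ V2 (fun ω => g₂ (fun a => X ω (Sum.inr a))) := by
    rw [hV, hβ]
    exact crossMoment_partialOut_mulVec_comp_inr hXi hMc hMpos.det_pos.ne'.isUnit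
      (hMpos.submatrix Sum.inl_injective).det_pos.ne'.isUnit hg₂ (γ := Sum.elim γ₁ 0) rfl
      fun ω => by simp [hpl, dotProduct, Fintype.sum_sum_type]
  refine ⟨?_, integral_sq_sub_dotProduct_le_of_normal_eq hVmem hg₂ hnormal⟩
  change β ∘ Sum.inr = MV⁻¹ *ᵥ momentVec μ V2 _
  rw [← hnormal, hMVc, mulVec_mulVec, nonsing_inv_mul _ hMVpos.det_pos.ne'.isUnit, one_mulVec]

/-- Partly linear case: if `g(X) = γ₁'X₁ + g₂(X₂)`, then with `V₂` the population
residual of `X₂` on `X₁`, the subvector `β₂` of the best linear approximation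
coefficient satisfies `β₂ = E[V₂V₂']⁻¹ E[V₂ g₂(X₂)]`, the minimizer over `b₂` of
`E[(g₂(X₂) - b₂'V₂)²]`. -/
theorem stmt16
    {Ω : Type*} [MeasurableSpace Ω] (μ : Measure Ω) [IsProbabilityMeasure μ]
    {p₁ p₂ : ℕ}
    (X : Ω → (Fin p₁ ⊕ Fin p₂) → ℝ) (g : ((Fin p₁ ⊕ Fin p₂) → ℝ) → ℝ)
    (γ₁ : Fin p₁ → ℝ) (g₂ : (Fin p₂ → ℝ) → ℝ)
    (hpl : ∀ v : (Fin p₁ ⊕ Fin p₂) → ℝ,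
      g v = (∑ j, γ₁ j * v (Sum.inl j)) + g₂ (fun a => v (Sum.inr a)))
    (hXi : ∀ i, MemLp (fun ω => X ω i) 2 μ)
    (hg : MemLp (fun ω => g (X ω)) 2 μ)
    (hg₂ : MemLp (fun ω => g₂ (fun a => X ω (Sum.inr a))) 2 μ)
    (M : Matrix (Fin p₁ ⊕ Fin p₂) (Fin p₁ ⊕ Fin p₂) ℝ)
    (hM : M = Matrix.of fun i j => ∫ ω, X ω i * X ω j ∂μ)
    (hMpos : M.PosDef)
    (β : (Fin p₁ ⊕ Fin p₂) → ℝ)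
    (hβ : β = M⁻¹.mulVec fun i => ∫ ω, X ω i * g (X ω) ∂μ)
    (M11 : Matrix (Fin p₁) (Fin p₁) ℝ)
    (hM11 : M11 = Matrix.of fun a b => ∫ ω, X ω (Sum.inl a) * X ω (Sum.inl b) ∂μ)
    (M21 : Matrix (Fin p₂) (Fin p₁) ℝ)
    (hM21 : M21 = Matrix.of fun a b => ∫ ω, X ω (Sum.inr a) * X ω (Sum.inl b) ∂μ)
    (V2 : Ω → Fin p₂ → ℝ)
    (hV2 : ∀ ω a, V2 ω a =
      X ω (Sum.inr a) - ∑ b, (M21 * M11⁻¹) a b * X ω (Sum.inl b))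
    (MV : Matrix (Fin p₂) (Fin p₂) ℝ)
    (hMV : MV = Matrix.of fun a b => ∫ ω, V2 ω a * V2 ω b ∂μ) :
    (fun a => β (Sum.inr a)) =
        MV⁻¹.mulVec (fun a => ∫ ω, V2 ω a * g₂ (fun b => X ω (Sum.inr b)) ∂μ) ∧
      ∀ b₂ : Fin p₂ → ℝ,
        (∫ ω, (g₂ (fun b => X ω (Sum.inr b)) - ∑ a, β (Sum.inr a) * V2 ω a) ^ 2 ∂μ) ≤
          ∫ ω, (g₂ (fun b => X ω (Sum.inr b)) - ∑ a, b₂ a * V2 ω a) ^ 2 ∂μ :=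
  stmt16_general μ X g γ₁ g₂ hpl hXi hg₂ M hM hMpos β hβ M11 hM11 M21 hM21 V2 hV2 MV hMV
end

section
/- Let H be a class of measurable functions of Z and X a square-integrable random vector with 0 < E[|X|²] < ∞. For the product class G = {(z,x) ↦ h(z)·x : h ∈ H}, the L¹ bracketing number satisfies N_[](ε, G, ‖·‖₁) ≤ N_[](ε/‖X‖₂, H, ‖·‖₂), where ‖·‖_r denotes the L_r(P) norm. -/
open MeasureTheory

/-- Minimal number of `ε`-brackets (w.r.t. the norm `nrm`) needed to cover the function
class `F`: the bracketing covering number `N_[](ε, F, nrm)`. -/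
noncomputable def bracketingNumber {Ω : Type*} (F : Set (Ω → ℝ))
    (nrm : (Ω → ℝ) → ℝ) (ε : ℝ) : ℕ∞ :=
  sInf {n : ℕ∞ | ∃ B : Finset ((Ω → ℝ) × (Ω → ℝ)), (B.card : ℕ∞) = n ∧
    ∀ f ∈ F, ∃ b ∈ B, (∀ x, b.1 x ≤ f x ∧ f x ≤ b.2 x) ∧
      nrm (fun x => b.2 x - b.1 x) ≤ ε}

/-!
A bracket `[l, u]` for `h` yields the bracket with centre `(l + u) / 2 * X` and half-width
`(u - l) / 2 * |X|` for `h * X`. By Cauchy–Schwarz its `L¹` width `∫ (u - l) |X|` is at most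
`‖u - l‖₂ ‖X‖₂`, so brackets of `L²` size `ε / ‖X‖₂` are mapped to brackets of `L¹` size `ε`,
and the number of brackets does not grow.
-/

def IsBracket {Ω : Type*} (nrm : (Ω → ℝ) → ℝ) (ε : ℝ) (b : (Ω → ℝ) × (Ω → ℝ))
    (f : Ω → ℝ) : Prop :=
  (∀ x, b.1 x ≤ f x ∧ f x ≤ b.2 x) ∧ nrm (fun x => b.2 x - b.1 x) ≤ ε

theorem bracketingNumber_le_of_map_bracket {Ω Ω' : Type*} {F : Set (Ω → ℝ)}
    {G : Set (Ω' → ℝ)} {nrmF : (Ω → ℝ) → ℝ} {nrmG : (Ω' → ℝ) → ℝ} {δ ε : ℝ}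
    (φ : (Ω → ℝ) × (Ω → ℝ) → (Ω' → ℝ) × (Ω' → ℝ))
    (hφ : ∀ g ∈ G, ∃ f ∈ F, ∀ b, IsBracket nrmF δ b f → IsBracket nrmG ε (φ b) g) :
    bracketingNumber G nrmG ε ≤ bracketingNumber F nrmF δ := by
  classical
  refine le_sInf ?_
  rintro _ ⟨B, rfl, hB⟩
  have hcover : ∀ g ∈ G, ∃ b ∈ B.image φ, IsBracket nrmG ε b g := fun g hg => by
    obtain ⟨f, hf, hfg⟩ := hφ g hg
    obtain ⟨b, hb, hbf⟩ := hB f hf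
    exact ⟨φ b, B.mem_image_of_mem φ hb, hfg b hbf⟩
  calc bracketingNumber G nrmG ε ≤ (B.image φ).card := sInf_le ⟨B.image φ, rfl, hcover⟩
    _ ≤ B.card := by exact_mod_cast B.card_image_le

theorem mul_mem_Icc_of_mem_Icc {l u h : ℝ} (hh : h ∈ Set.Icc l u) (x : ℝ) :
    h * x ∈ Set.Icc ((l + u) / 2 * x - (u - l) / 2 * |x|)
      ((l + u) / 2 * x + (u - l) / 2 * |x|) := by
  have : |h * x - (l + u) / 2 * x| ≤ (u - l) / 2 * |x| := by
    rw [← sub_mul, abs_mul]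
    exact mul_le_mul_of_nonneg_right (abs_le.2 ⟨by linarith [hh.1], by linarith [hh.2]⟩)
      (abs_nonneg x)
  constructor <;> linarith [abs_le.1 this]

section

variable {Ω : Type*} [MeasurableSpace Ω] {μ : Measure Ω}

theorem integral_abs_mul_abs_le_sqrt_mul_sqrt {f g : Ω → ℝ} (hf : MemLp f 2 μ)
    (hg : MemLp g 2 μ) :
    ∫ ω, |f ω| * |g ω| ∂μ ≤ √(∫ ω, f ω ^ 2 ∂μ) * √(∫ ω, g ω ^ 2 ∂μ) := by
  have h2 : ENNReal.ofReal 2 = 2 := by norm_num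
  have := integral_mul_le_Lp_mul_Lq_of_nonneg Real.HolderConjugate.two_two
    (Filter.Eventually.of_forall fun ω => abs_nonneg (f ω))
    (Filter.Eventually.of_forall fun ω => abs_nonneg (g ω))
    (h2 ▸ hf.abs) (h2 ▸ hg.abs)
  simpa only [Real.rpow_two, sq_abs, ← Real.sqrt_eq_rpow] using this

/-- When `f ^ 2` is not integrable, `√(∫ f ^ 2)` is the junk value `0`; the correction `p`
then makes the integrand on the left non-integrable, so that its integral is `0` as well. -/
theorem exists_nonneg_integral_abs_mul_abs_add_le (f : Ω → ℝ) {g : Ω → ℝ} (hg : MemLp g 2 μ) :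
    ∃ p : Ω → ℝ, 0 ≤ p ∧
      ∫ ω, |f ω| * |g ω| + p ω ∂μ ≤ √(∫ ω, f ω ^ 2 ∂μ) * √(∫ ω, g ω ^ 2 ∂μ) := by
  by_cases hf2 : Integrable (fun ω => f ω ^ 2) μ
  · refine ⟨0, le_rfl, ?_⟩
    have hf : MemLp (fun ω => |f ω|) 2 μ := by
      have hmeas : AEStronglyMeasurable (fun ω => |f ω|) μ := by
        simpa only [Real.sqrt_sq_eq_abs] using
          Real.continuous_sqrt.comp_aestronglyMeasurable hf2.aestronglyMeasurable
      exact (memLp_two_iff_integrable_sq hmeas).2 (by simpa only [sq_abs] using hf2)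
    simpa only [Pi.zero_apply, add_zero, abs_abs, sq_abs] using
      integral_abs_mul_abs_le_sqrt_mul_sqrt hf hg
  have hrhs : 0 ≤ √(∫ ω, f ω ^ 2 ∂μ) * √(∫ ω, g ω ^ 2 ∂μ) := by positivity
  by_cases hfg : Integrable (fun ω => |f ω| * |g ω|) μ
  · refine ⟨fun ω => f ω ^ 2, fun ω => sq_nonneg (f ω), ?_⟩
    rwa [integral_undef fun h => hf2 (by convert h.sub hfg using 1; ext ω; simp)]
  · refine ⟨0, le_rfl, ?_⟩
    simpa only [Pi.zero_apply, add_zero, integral_undef hfg] using hrhs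

noncomputable def mulBracket (X : Ω → ℝ) (pad : (Ω → ℝ) → Ω → ℝ) (b : (Ω → ℝ) × (Ω → ℝ)) :
    (Ω → ℝ) × (Ω → ℝ) :=
  (fun ω => (b.1 ω + b.2 ω) / 2 * X ω - (b.2 ω - b.1 ω) / 2 * |X ω|,
   fun ω => (b.1 ω + b.2 ω) / 2 * X ω + (b.2 ω - b.1 ω) / 2 * |X ω|
     + pad (fun ω => b.2 ω - b.1 ω) ω)

theorem isBracket_mulBracket {X : Ω → ℝ} {pad : (Ω → ℝ) → Ω → ℝ} (hpad_nonneg : ∀ g, 0 ≤ pad g)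
    (hpad : ∀ g, ∫ ω, |g ω| * |X ω| + pad g ω ∂μ ≤ √(∫ ω, g ω ^ 2 ∂μ) * √(∫ ω, X ω ^ 2 ∂μ))
    {δ : ℝ} {b : (Ω → ℝ) × (Ω → ℝ)} {h : Ω → ℝ}
    (hb : IsBracket (fun f => √(∫ ω, f ω ^ 2 ∂μ)) δ b h) :
    IsBracket (fun f => ∫ ω, |f ω| ∂μ) (δ * √(∫ ω, X ω ^ 2 ∂μ)) (mulBracket X pad b)
      (fun ω => h ω * X ω) := by
  obtain ⟨hbh, hbδ⟩ := hb
  set g : Ω → ℝ := fun ω => b.2 ω - b.1 ω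
  have hg : ∀ ω, 0 ≤ g ω := fun ω => sub_nonneg.2 ((hbh ω).1.trans (hbh ω).2)
  refine ⟨fun ω => ?_, ?_⟩
  · have hmem := mul_mem_Icc_of_mem_Icc (hbh ω) (X ω)
    exact ⟨hmem.1, hmem.2.trans (le_add_of_nonneg_right (hpad_nonneg g ω))⟩
  · have hwidth : ∀ ω, |(mulBracket X pad b).2 ω - (mulBracket X pad b).1 ω|
        = |g ω| * |X ω| + pad g ω := fun ω => by
      have hdiff : (mulBracket X pad b).2 ω - (mulBracket X pad b).1 ω
          = g ω * |X ω| + pad g ω := by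
        simp only [mulBracket, g]
        ring
      rw [hdiff, abs_of_nonneg (hg ω),
        abs_of_nonneg (add_nonneg (mul_nonneg (hg ω) (abs_nonneg _)) (hpad_nonneg g ω))]
    simp only [hwidth]
    exact (hpad g).trans (mul_le_mul_of_nonneg_right hbδ (Real.sqrt_nonneg _))

end

theorem stmt17_general
    {Ω : Type*} [MeasurableSpace Ω]
    (μ : Measure Ω)
    (X : Ω → ℝ)
    (hX2 : MemLp X 2 μ) (hXpos : 0 < ∫ ω, X ω ^ 2 ∂μ)
    (H : Set (Ω → ℝ))
    (G : Set (Ω → ℝ))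
    (hG : G = {f | ∃ h ∈ H, f = fun ω => h ω * X ω})
    (ε : ℝ) :
    bracketingNumber G (fun f => ∫ ω, |f ω| ∂μ) ε ≤
      bracketingNumber H (fun f => Real.sqrt (∫ ω, f ω ^ 2 ∂μ))
        (ε / Real.sqrt (∫ ω, X ω ^ 2 ∂μ)) := by
  choose pad hpad_nonneg hpad using
    fun f => exists_nonneg_integral_abs_mul_abs_add_le (μ := μ) f hX2
  have hε_eq : ε = ε / √(∫ ω, X ω ^ 2 ∂μ) * √(∫ ω, X ω ^ 2 ∂μ) :=
    (div_mul_cancel₀ ε (Real.sqrt_pos.2 hXpos).ne').symm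
  refine bracketingNumber_le_of_map_bracket (mulBracket X pad) ?_
  rw [hG]
  rintro _ ⟨h, hH, rfl⟩
  refine ⟨h, hH, fun b hb => ?_⟩
  rw [hε_eq]
  exact isBracket_mulBracket hpad_nonneg hpad hb

/-- For a class `H` of measurable functions of `Z` and square-integrable `X` with
`0 < E[|X|²] < ∞`, the product class `G = {h(Z)·X : h ∈ H}` satisfies
`N_[](ε, G, ‖·‖₁) ≤ N_[](ε/‖X‖₂, H, ‖·‖₂)`. -/
theorem stmt17
    {Ω γty : Type*} [MeasurableSpace Ω] [MeasurableSpace γty]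
    (μ : Measure Ω) [IsProbabilityMeasure μ]
    (Z : Ω → γty) (X : Ω → ℝ)
    (hX2 : MemLp X 2 μ) (hXpos : 0 < ∫ ω, X ω ^ 2 ∂μ)
    (H : Set (Ω → ℝ))
    (hHmeas : ∀ h ∈ H, Measurable[MeasurableSpace.comap Z inferInstance] h)
    (G : Set (Ω → ℝ))
    (hG : G = {f | ∃ h ∈ H, f = fun ω => h ω * X ω})
    (ε : ℝ) (hε : 0 < ε) :
    bracketingNumber G (fun f => ∫ ω, |f ω| ∂μ) ε ≤
      bracketingNumber H (fun f => Real.sqrt (∫ ω, f ω ^ 2 ∂μ))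
        (ε / Real.sqrt (∫ ω, X ω ^ 2 ∂μ)) :=
  stmt17_general μ X hX2 hXpos H G hG ε
end
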